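/- In the XY-model, for every even k ≥ 2 the sum over all maps ι : {1,…,k} → {1,…,n−1} of the number of (ε,ι)-noncrossing pair partitions satisfies Σ_ι #NC₂^{(ε,ι)}(k) ≤ M_k. -/

import Mathlib

set_option linter.unusedSectionVars false
set_option linter.deprecated false

open Finset Equiv

namespace LRH

variable {n m : ℕ}

/-- The ε-matrix determined by the interaction sets `K`. -/
def eps (K : Fin m → Finset (Fin n)) (i j : Fin m) : ℕ :=
  if K i ∩ K j = ∅ then 1 else 0

section Partitions

variable {β : Type*} [LinearOrder β]

/-- A partition (equivalence relation) is (ε,ι)-noncrossing. -/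
def EpsNC (K : Fin m → Finset (Fin n)) (ι : β → Fin m) (α : Setoid β) : Prop :=
  ∀ i p j q : β, i < p → p < j → j < q →
    α i j → α p q → ¬ α i p → eps K (ι i) (ι p) = 1

/-- Noncrossing partition of a linearly ordered set. -/
def IsNoncrossing (α : Setoid β) : Prop :=
  ∀ i p j q : β, i < p → p < j → j < q →
    α i j → α p q → ¬ α i p → False

/-- Pair partition: every class has exactly two elements. -/
def IsPairPartition (α : Setoid β) : Prop :=
  ∀ i : β, {j | α i j}.ncard = 2

/-- The set `NC^{(ε,ι)}`. -/
def NCSet (K : Fin m → Finset (Fin n)) (ι : β → Fin m) : Set (Setoid β) :=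
  {α | α ≤ Setoid.ker ι ∧ EpsNC K ι α}

/-- The set `NC₂^{(ε,ι)}` of (ε,ι)-noncrossing pair partitions. -/
def NC2Set (K : Fin m → Finset (Fin n)) (ι : β → Fin m) : Set (Setoid β) :=
  {α | IsPairPartition α ∧ α ≤ Setoid.ker ι ∧ EpsNC K ι α}

/-- Restriction of a partition to a subset (as a partition of the subtype). -/
def restrictSetoid (α : Setoid β) (p : β → Prop) : Setoid {x // p x} :=
  Setoid.comap Subtype.val α

end Partitions

section Perms

variable {β : Type*} [LinearOrder β] [Fintype β]

/-- The full cycle on a finite subset `J`, in increasing order, fixing the complement. -/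
def fullCycleOn (J : Finset β) : Equiv.Perm β :=
  (J.sort (· ≤ ·)).formPerm

/-- Number of cycles of a permutation, counting fixed points. -/
def numCycles (σ : Equiv.Perm β) : ℕ :=
  σ.cycleType.card + (Fintype.card β - σ.support.card)

/-- `|σ|`, the minimal number of transpositions needed to write σ; equals
`card − numCycles`. -/
def permNorm (σ : Equiv.Perm β) : ℕ :=
  σ.support.card - σ.cycleType.card

/-- The permutation induced on `J` (extended by the identity off `J`), when `σ`
preserves `J`; junk value `1` otherwise. -/
def permRestrict (σ : Equiv.Perm β) (J : Finset β) : Equiv.Perm β :=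
  if h : ∀ x : β, x ∈ J ↔ σ x ∈ J then Equiv.Perm.ofSubtype (σ.subtypePerm (fun x => (h x).symm)) else 1

/-- `σ` restricted to `J` is noncrossing, i.e. lies on the geodesic `1 - σ_J - γ_J`. -/
def NCOn (σ : Equiv.Perm β) (J : Finset β) : Prop :=
  permNorm (permRestrict σ J) + permNorm ((permRestrict σ J)⁻¹ * fullCycleOn J) = J.card - 1

/-- `σ_J` and `τ_J` lie on a common geodesic `1 - σ_J - τ_J - γ_J`. -/
def geodesic3 (σ τ : Equiv.Perm β) (J : Finset β) : Prop :=
  permNorm (permRestrict σ J) + permNorm ((permRestrict σ J)⁻¹ * permRestrict τ J)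
    + permNorm ((permRestrict τ J)⁻¹ * fullCycleOn J) = J.card - 1

end Perms

variable {k : ℕ}

/-- `J_s = {j : s ∈ K_{ι_j}}`. -/
def Jset (K : Fin m → Finset (Fin n)) (ι : Fin k → Fin m) (s : Fin n) : Finset (Fin k) :=
  Finset.univ.filter (fun j => s ∈ K (ι j))

/-- The set `S_NC^{(ε,ι)}(γ_k)` of (ε,ι)-noncrossing permutations. -/
def SNCSet (K : Fin m → Finset (Fin n)) (ι : Fin k → Fin m) : Set (Equiv.Perm (Fin k)) :=
  {σ | (∀ j, ι (σ j) = ι j) ∧ ∀ s : Fin n, NCOn σ (Jset K ι s)}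

/-- The relation `σ ≤ τ` on `S_NC^{(ε,ι)}(γ_k)`. -/
def geoLe (K : Fin m → Finset (Fin n)) (ι : Fin k → Fin m) (σ τ : Equiv.Perm (Fin k)) : Prop :=
  ∀ s : Fin n, geodesic3 σ τ (Jset K ι s)

/-- The interaction sets of the XY-model: `K ι = {ι, ι+1}`. -/
def KXY (n : ℕ) : Fin (n - 1) → Finset (Fin n) := fun i =>
  {⟨i.val, Nat.lt_of_lt_of_le i.isLt (Nat.sub_le n 1)⟩,
   ⟨i.val + 1, by have := i.isLt; omega⟩}

section PMap

variable {β : Type*} [LinearOrder β] [Fintype β]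

/-- The equivalence class of `i` as a finset. -/
noncomputable def classFinset (α : Setoid β) (i : β) : Finset β :=
  letI := Classical.decPred (α i)
  Finset.univ.filter (α i)

lemma mem_classFinset {α : Setoid β} {i j : β} : j ∈ classFinset α i ↔ α i j := by
  classical
  simp [classFinset]

lemma self_mem_classFinset (α : Setoid β) (i : β) : i ∈ classFinset α i :=
  mem_classFinset.mpr (α.refl i)

lemma classFinset_eq_of_rel {α : Setoid β} {i j : β} (h : α i j) :
    classFinset α i = classFinset α j := by
  ext x
  simp only [mem_classFinset]
  exact ⟨fun hx => α.trans (α.symm h) hx, fun hx => α.trans h hx⟩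

/-- The map `P` from partitions to permutations: each class, listed increasingly,
becomes a cycle. -/
noncomputable def partitionToPerm (α : Setoid β) : Equiv.Perm β :=
  Equiv.ofBijective (fun i => ((classFinset α i).sort (· ≤ ·)).formPerm i) (by
    rw [← Finite.injective_iff_bijective]
    intro a b hab
    dsimp only at hab
    have ha : ((classFinset α a).sort (· ≤ ·)).formPerm a ∈ (classFinset α a).sort (· ≤ ·) :=
      List.formPerm_apply_mem_of_mem ((Finset.mem_sort _).mpr (self_mem_classFinset α a))
    have hb : ((classFinset α b).sort (· ≤ ·)).formPerm b ∈ (classFinset α b).sort (· ≤ ·) :=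
      List.formPerm_apply_mem_of_mem ((Finset.mem_sort _).mpr (self_mem_classFinset α b))
    have ha' : α a (((classFinset α a).sort (· ≤ ·)).formPerm a) :=
      mem_classFinset.mp ((Finset.mem_sort _).mp ha)
    have hb' : α b (((classFinset α b).sort (· ≤ ·)).formPerm b) :=
      mem_classFinset.mp ((Finset.mem_sort _).mp hb)
    have hrel : α a b := by
      refine α.iseqv.trans ha' ?_
      rw [hab]
      exact α.iseqv.symm hb'
    have hcc : classFinset α a = classFinset α b := classFinset_eq_of_rel hrel
    rw [hcc] at hab
    exact ((classFinset α b).sort (· ≤ ·)).formPerm.injective hab)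

end PMap

instance setoidFinite {X : Type*} [Finite X] : Finite (Setoid X) :=
  Finite.of_injective (fun s : Setoid X => s.r) fun a b h => by
    cases a; cases b; dsimp at h; subst h; rfl

section Mobius

/-- The Möbius function of a finite poset, determined by `μ(x,x) = 1` and
`∑_{x ≤ z ≤ y} μ(z,y) = 0` for `x < y`. -/
noncomputable def mobius {P : Type*} [PartialOrder P] [Fintype P] (a b : P) : ℤ :=
  letI := Classical.dec
  if a = b then 1
  else if a ≤ b then
    - ∑ z ∈ (Finset.univ.filter (fun z => a < z ∧ z ≤ b)).attach,
        mobius (z : P) b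
  else 0
termination_by letI := Classical.dec; (Finset.univ.filter (fun z : P => a < z ∧ z ≤ b)).card
decreasing_by
  classical
  have hz := z.2
  simp only [Finset.mem_filter, Finset.mem_univ, true_and] at hz
  apply Finset.card_lt_card
  rw [Finset.ssubset_iff_of_subset]
  · exact ⟨z, by simp [hz.1, hz.2], by simp⟩
  · intro w hw
    simp only [Finset.mem_filter, Finset.mem_univ, true_and] at hw ⊢
    exact ⟨lt_trans hz.1 hw.1, hw.2⟩

end Mobius

section Restrict

variable {n m k : ℕ}

lemma restrictSetoid_isNoncrossing {K : Fin m → Finset (Fin n)}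
    (hK : ∀ i, (K i).Nonempty) {ι : Fin k → Fin m} {α : Setoid (Fin k)}
    (hα : α ∈ NCSet K ι) (v : Fin m) :
    IsNoncrossing (restrictSetoid α (fun j => ι j = v)) := by
  rintro ⟨i, hi⟩ ⟨p, hp⟩ ⟨j, hj⟩ ⟨q, hq⟩ hip hpj hjq hij hpq hnip
  have h1 : i < p := hip
  have h2 : p < j := hpj
  have h3 : j < q := hjq
  have hij' : α i j := hij
  have hpq' : α p q := hpq
  have hnip' : ¬ α i p := hnip
  have := hα.2 i p j q h1 h2 h3 hij' hpq' hnip'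
  rw [hi, hp] at this
  unfold eps at this
  rw [Finset.inter_self] at this
  rcases hK v with ⟨x, hx⟩
  simp only [(Finset.nonempty_iff_ne_empty.mp ⟨x, hx⟩), if_false] at this
  exact absurd this (by simp [Finset.nonempty_iff_ne_empty.mp ⟨x, hx⟩])

end Restrict

end LRH

namespace LRH

/-- The combinatorial bound `M_k` for the XY-model:
`M_k = 2^k · Σ_{ℓ₁+⋯+ℓ_{n−3} ≤ k} k!/(ℓ₁!⋯ℓ_{n−3}!(k−Σℓ)!) · 2^{(k−Σℓ)/2}`. -/
noncomputable def Mk (n k : ℕ) : ℝ :=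
  2 ^ k *
    ∑ ℓ ∈ (Fintype.piFinset fun _ : Fin (n - 3) => Finset.range (k + 1)).filter
        (fun ℓ => ∑ i, ℓ i ≤ k),
      (Nat.factorial k : ℝ) /
          ((∏ i, (Nat.factorial (ℓ i) : ℝ)) * (Nat.factorial (k - ∑ i, ℓ i) : ℝ)) *
        (2 : ℝ) ^ (((k - ∑ i, ℓ i : ℕ) : ℝ) / 2)

end LRH

/-!
Merge the labels `0` and `1` of the XY-model into one colour, leaving `n - 2` colours. Labels of
the same colour have intersecting interaction sets, so an (ε,ι)-noncrossing pair partition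
restricts to a noncrossing pairing on every colour class and is therefore determined by its word
of openers and closers. Given the colours, the labels are determined except on colour `0`, where
there is one free bit per block, i.e. per opener of colour `0`. Hence over a colouring with `r`
positions of colour `0` there are at most `2^k · 2^(r/2) ≤ 2^k · √2^r` pairs `(ι, α)`; summing
over colourings gives `2^k (√2 + n - 3)^k`, which is `M_k` by the multinomial theorem.
-/

namespace LRH

section PairPartition

variable {β : Type*} {α : Setoid β}

open Classical in
noncomputable def partner (α : Setoid β) (i : β) : β :=
  if h : ∃ j, j ≠ i ∧ α i j then h.choose else i

namespace IsPairPartition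

theorem exists_setOf_rel_eq_pair (hα : IsPairPartition α) (i : β) :
    ∃ j, j ≠ i ∧ {x | α i x} = {i, j} := by
  obtain ⟨a, b, hab, hs⟩ := Set.ncard_eq_two.mp (hα i)
  have hi : i ∈ ({a, b} : Set β) := hs ▸ α.refl i
  rcases hi with rfl | rfl
  · exact ⟨b, Ne.symm hab, hs⟩
  · exact ⟨a, hab, by rw [hs, Set.pair_comm]⟩

theorem partner_spec (hα : IsPairPartition α) (i : β) : partner α i ≠ i ∧ α i (partner α i) := by
  obtain ⟨j, hji, hs⟩ := hα.exists_setOf_rel_eq_pair i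
  have hex : ∃ j, j ≠ i ∧ α i j := ⟨j, hji, show j ∈ {x | α i x} by simp [hs]⟩
  rw [partner, dif_pos hex]
  exact hex.choose_spec

theorem rel_iff (hα : IsPairPartition α) (i x : β) : α i x ↔ x = i ∨ x = partner α i := by
  obtain ⟨j, -, hs⟩ := hα.exists_setOf_rel_eq_pair i
  have hj : partner α i = j := by
    have h : partner α i ∈ ({i, j} : Set β) := hs ▸ (hα.partner_spec i).2
    exact h.resolve_left (hα.partner_spec i).1
  simpa [hj] using Set.ext_iff.mp hs x

theorem partner_ne (hα : IsPairPartition α) (i : β) : partner α i ≠ i :=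
  (hα.partner_spec i).1

theorem rel_partner (hα : IsPairPartition α) (i : β) : α i (partner α i) :=
  (hα.partner_spec i).2

theorem partner_partner (hα : IsPairPartition α) (i : β) : partner α (partner α i) = i :=
  (((hα.rel_iff _ i).mp (α.symm (hα.rel_partner i))).resolve_left
    (hα.partner_ne i).symm).symm

theorem ext (hα : IsPairPartition α) {α' : Setoid β} (hα' : IsPairPartition α')
    (h : ∀ i, partner α i = partner α' i) : α = α' :=
  Setoid.ext fun i x => by rw [hα.rel_iff, hα'.rel_iff, h]

/-- `partner α` exchanges the openers and the closers of `S`. -/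
theorem card_filter_lt_partner_mul_two [LinearOrder β] (hα : IsPairPartition α) (S : Finset β)
    (hS : ∀ j ∈ S, partner α j ∈ S) :
    #(S.filter fun j => j < partner α j) * 2 = #S := by
  have hclosers : #(S.filter fun j => ¬ j < partner α j) = #(S.filter fun j => j < partner α j) :=
    Finset.card_nbij' (partner α) (partner α)
      (fun j hj => by
        simp only [coe_filter, Set.mem_setOf_eq, not_lt] at hj ⊢
        rw [hα.partner_partner]
        exact ⟨hS j hj.1, lt_of_le_of_ne hj.2 (hα.partner_ne j)⟩)
      (fun j hj => by
        simp only [coe_filter, Set.mem_setOf_eq, not_lt] at hj ⊢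
        rw [hα.partner_partner]
        exact ⟨hS j hj.1, hj.2.le⟩)
      (fun j _ => hα.partner_partner j) (fun j _ => hα.partner_partner j)
  have := Finset.card_filter_add_card_filter_not (s := S) (fun j => j < partner α j)
  omega

end IsPairPartition

end PairPartition

section NoncrossingMatching

variable {β : Type*} [LinearOrder β]

structure IsNCMatchingOn (S : Finset β) (f : β → β) : Prop where
  mapsTo : ∀ x ∈ S, f x ∈ S
  apply_apply : ∀ x ∈ S, f (f x) = x
  apply_ne : ∀ x ∈ S, f x ≠ x
  noncrossing : ∀ i ∈ S, ∀ p ∈ S, i < p → p < f i → ¬ f i < f p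

namespace IsNCMatchingOn

variable {S : Finset β} {f g : β → β}

theorem apply_lt_iff (hf : IsNCMatchingOn S f) {x : β} (hx : x ∈ S) : f x < x ↔ ¬ x < f x := by
  have := hf.apply_ne x hx
  constructor <;> intro h
  · exact not_lt.mpr h.le
  · exact lt_of_le_of_ne (not_lt.mp h) this

/-- The first closer `j₀` is matched with the last point of `S` before it. -/
theorem le_apply_of_lt_of_forall_le (hf : IsNCMatchingOn S f) {j₀ : β} (hj₀ : j₀ ∈ S)
    (hfirst : ∀ j ∈ S, f j < j → j₀ ≤ j) :
    ∀ q ∈ S, q < j₀ → q ≤ f j₀ := by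
  intro q hq hqj
  by_contra! hlt
  have hopen : q < f q := by
    by_contra h
    exact not_le.mpr hqj (hfirst q hq ((hf.apply_lt_iff hq).mpr h))
  have hfq : j₀ < f q := by
    refine lt_of_le_of_ne (not_lt.mp fun h => ?_) fun h => ?_
    · exact not_le.mpr h (hfirst (f q) (hf.mapsTo q hq) (by rwa [hf.apply_apply q hq]))
    · exact hlt.ne (by rw [h, hf.apply_apply q hq])
  exact hf.noncrossing (f j₀) (hf.mapsTo j₀ hj₀) q hq hlt
    (by rwa [hf.apply_apply j₀ hj₀]) (by rwa [hf.apply_apply j₀ hj₀])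

theorem erase_pair (hf : IsNCMatchingOn S f) {x : β} (hx : x ∈ S) :
    IsNCMatchingOn ((S.erase x).erase (f x)) f where
  mapsTo z hz := by
    simp only [Finset.mem_erase] at hz ⊢
    refine ⟨fun h => hz.2.1 ?_, fun h => hz.1 ?_, hf.mapsTo z hz.2.2⟩
    · rw [← hf.apply_apply z hz.2.2, h, hf.apply_apply x hx]
    · rw [← hf.apply_apply z hz.2.2, h]
  apply_apply z hz := hf.apply_apply z (Finset.mem_of_mem_erase (Finset.mem_of_mem_erase hz))
  apply_ne z hz := hf.apply_ne z (Finset.mem_of_mem_erase (Finset.mem_of_mem_erase hz))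
  noncrossing i hi p hp :=
    hf.noncrossing i (Finset.mem_of_mem_erase (Finset.mem_of_mem_erase hi))
      p (Finset.mem_of_mem_erase (Finset.mem_of_mem_erase hp))

theorem eqOn_of_lt_apply_iff (hf : IsNCMatchingOn S f) (hg : IsNCMatchingOn S g)
    (hopen : ∀ x ∈ S, x < f x ↔ x < g x) : ∀ x ∈ S, f x = g x := by
  induction S using Finset.strongInduction with
  | H S ih =>
  intro x hx
  have hclose : ∀ j ∈ S, f j < j ↔ g j < j := fun j hj => by
    rw [hf.apply_lt_iff hj, hg.apply_lt_iff hj, hopen j hj]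
  have hmax := S.max'_mem ⟨x, hx⟩
  have hC : (S.filter fun j => f j < j).Nonempty :=
    ⟨_, Finset.mem_filter.mpr ⟨hmax, lt_of_le_of_ne (S.le_max' _ (hf.mapsTo _ hmax))
      (hf.apply_ne _ hmax)⟩⟩
  obtain ⟨hj₀, hfj₀⟩ := Finset.mem_filter.mp ((S.filter fun j => f j < j).min'_mem hC)
  set j₀ := (S.filter fun j => f j < j).min' hC
  have hfirst : ∀ j ∈ S, f j < j → j₀ ≤ j := fun j hj h =>
    Finset.min'_le (S.filter fun y => f y < y) j (Finset.mem_filter.mpr ⟨hj, h⟩)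
  have hgj₀ := (hclose j₀ hj₀).mp hfj₀
  have hpair : f j₀ = g j₀ := le_antisymm
    (hg.le_apply_of_lt_of_forall_le hj₀ (fun j hj h => hfirst j hj ((hclose j hj).mpr h))
      (f j₀) (hf.mapsTo j₀ hj₀) hfj₀)
    (hf.le_apply_of_lt_of_forall_le hj₀ hfirst (g j₀) (hg.mapsTo j₀ hj₀) hgj₀)
  by_cases hxj₀ : x = j₀
  · rw [hxj₀, hpair]
  by_cases hxf : x = f j₀
  · rw [hxf, hf.apply_apply j₀ hj₀, hpair, hg.apply_apply j₀ hj₀]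
  have hsub : (S.erase j₀).erase (f j₀) ⊂ S :=
    ((Finset.erase_ssubset hj₀).trans_le' (Finset.erase_subset _ _))
  have hg' := hg.erase_pair hj₀
  rw [← hpair] at hg'
  exact ih _ hsub (hf.erase_pair hj₀) hg'
    (fun z hz => hopen z (Finset.mem_of_mem_erase (Finset.mem_of_mem_erase hz))) x
    (by simp [hx, hxj₀, hxf])

end IsNCMatchingOn

end NoncrossingMatching

section EpsNoncrossing

variable {n m : ℕ} {β : Type*} [LinearOrder β] {K : Fin m → Finset (Fin n)} {ι : β → Fin m}
  {α : Setoid β}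

theorem label_partner (hα : α ∈ NC2Set K ι) (j : β) : ι (partner α j) = ι j :=
  (hα.2.1 (hα.1.rel_partner j)).symm

theorem isNCMatchingOn_partner (hα : α ∈ NC2Set K ι) {S : Finset β}
    (hS : ∀ j ∈ S, partner α j ∈ S) (hK : ∀ i ∈ S, ∀ p ∈ S, (K (ι i) ∩ K (ι p)).Nonempty) :
    IsNCMatchingOn S (partner α) where
  mapsTo := hS
  apply_apply j _ := hα.1.partner_partner j
  apply_ne j _ := hα.1.partner_ne j
  noncrossing i hi p hp hip hpi hcross := by
    have hnrel : ¬ α i p := fun h => by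
      rcases (hα.1.rel_iff i p).mp h with h | h
      exacts [hip.ne' h, hpi.ne h]
    have := hα.2.2 i p _ _ hip hpi hcross (hα.1.rel_partner i) (hα.1.rel_partner p) hnrel
    simp [eps, (hK i hi p hp).ne_empty] at this

end EpsNoncrossing

section XY

variable {n k : ℕ}

/-- Truncated subtraction identifies the labels `0` and `1`; the common site is `max v w`. -/
theorem KXY_inter_nonempty {v w : Fin (n - 1)} (h : (v : ℕ) - 1 = (w : ℕ) - 1) :
    (KXY n v ∩ KXY n w).Nonempty := by
  have := v.isLt
  have := w.isLt
  refine ⟨⟨max v w, by omega⟩, ?_⟩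
  simp only [KXY, mem_inter, mem_insert, mem_singleton, Fin.ext_iff]
  omega

def xyColor (hn : 3 ≤ n) (v : Fin (n - 1)) : Fin (n - 2) :=
  ⟨(v : ℕ) - 1, by have := v.isLt; omega⟩

variable {ι ι' : Fin k → Fin (n - 1)} {α α' : Setoid (Fin k)}

theorem isNCMatchingOn_colorClass (hα : α ∈ NC2Set (KXY n) ι) (a : ℕ) :
    IsNCMatchingOn (univ.filter fun j => (ι j : ℕ) - 1 = a) (partner α) :=
  isNCMatchingOn_partner hα (by simp [label_partner hα])
    (fun i hi p hp => KXY_inter_nonempty (by simp only [mem_filter] at hi hp; omega))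

theorem eq_of_lt_partner_iff (hα : α ∈ NC2Set (KXY n) ι) (hα' : α' ∈ NC2Set (KXY n) ι')
    (hcol : ∀ j, (ι j : ℕ) - 1 = (ι' j : ℕ) - 1)
    (hopen : ∀ j, j < partner α j ↔ j < partner α' j)
    (hone : ∀ j, j < partner α j → (ι j : ℕ) ≤ 1 → ((ι j : ℕ) = 1 ↔ (ι' j : ℕ) = 1)) :
    ι = ι' ∧ α = α' := by
  have hpartner : ∀ x, partner α x = partner α' x := by
    intro x
    have hclass' := isNCMatchingOn_colorClass hα' ((ι x : ℕ) - 1)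
    rw [Finset.filter_congr fun j _ => by rw [← hcol j]] at hclass'
    exact (isNCMatchingOn_colorClass hα _).eqOn_of_lt_apply_iff hclass'
      (fun j _ => hopen j) x (by simp)
  have hopener : ∀ j, j < partner α j → ι j = ι' j := fun j hj => by
    have := hcol j
    by_cases h : (ι j : ℕ) ≤ 1
    · have := hone j hj h
      exact Fin.ext (by omega)
    · exact Fin.ext (by omega)
  refine ⟨funext fun j => ?_, hα.1.ext hα'.1 hpartner⟩
  rcases lt_or_gt_of_ne (hα.1.partner_ne j) with h | h
  · calc ι j = ι (partner α j) := (label_partner hα j).symm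
      _ = ι' (partner α j) := hopener _ (by rwa [hα.1.partner_partner])
      _ = ι' j := by rw [hpartner j, label_partner hα' j]
  · exact hopener j h

end XY

theorem card_sigma_powerset_filter_le {γ : Type*} [Fintype γ] [DecidableEq γ] (R : Finset γ) :
    #((univ.filter fun w : γ → Bool => #(R.filter (w ·)) * 2 = #R).sigma
        fun w => (R.filter (w ·)).powerset) ≤ 2 ^ Fintype.card γ * 2 ^ (#R / 2) := by
  rw [card_sigma, sum_congr rfl fun w hw => by
    rw [card_powerset, ← Nat.div_eq_of_eq_mul_left two_pos (mem_filter.mp hw).2.symm], sum_const,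
    smul_eq_mul]
  exact Nat.mul_le_mul_right _ (card_le_univ _ |>.trans (by simp))

/-- A pair `(ι, α)` is encoded by the opener word of `α` and the set of openers with label `1`
among the positions of colour `0`. -/
theorem sum_ncard_NC2Set_fiber_le {n k : ℕ} (hn : 3 ≤ n) (c : Fin k → Fin (n - 2)) :
    ∑ ι ∈ univ.filter (fun ι : Fin k → Fin (n - 1) => xyColor hn ∘ ι = c),
        (NC2Set (KXY n) ι).ncard
      ≤ 2 ^ k * 2 ^ (#(univ.filter fun j => c j = ⟨0, by omega⟩) / 2) := by
  classical
  let _ := Fintype.ofFinite (Setoid (Fin k))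
  set R := univ.filter fun j => c j = ⟨0, by omega⟩
  set W := univ.filter fun w : Fin k → Bool => #(R.filter (w ·)) * 2 = #R
  have hcol : ∀ {ι}, xyColor hn ∘ ι = c → ∀ j, ((ι j : Fin (n - 1)) : ℕ) - 1 = c j :=
    fun h j => congrArg Fin.val (congrFun h j)
  calc _ = #((univ.filter fun ι => xyColor hn ∘ ι = c).sigma
          fun ι => (NC2Set (KXY n) ι).toFinset) := by
        rw [card_sigma]
        exact sum_congr rfl fun ι _ => Set.ncard_eq_toFinset_card' _
    _ ≤ #(W.sigma fun w => (R.filter (w ·)).powerset) := by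
        refine card_le_card_of_injOn (fun x => ⟨fun j => decide (j < partner x.2 j),
          R.filter fun j => j < partner x.2 j ∧ (x.1 j : ℕ) = 1⟩) ?_ ?_
        · rintro ⟨ι, α⟩ hx
          simp only [coe_sigma, Set.mem_sigma_iff, coe_filter, mem_univ, true_and,
            Set.mem_setOf_eq, mem_coe, Set.mem_toFinset] at hx
          obtain ⟨hι, hα⟩ := hx
          simp only [coe_sigma, Set.mem_sigma_iff, coe_filter, mem_univ, true_and,
            Set.mem_setOf_eq, coe_powerset, Set.mem_preimage, decide_eq_true_eq, W]
          refine ⟨hα.1.card_filter_lt_partner_mul_two R fun j hj => ?_,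
            fun j hj => ⟨hj.1, hj.2.1⟩⟩
          simp only [R, mem_filter, mem_univ, true_and, Fin.ext_iff] at hj ⊢
          rw [← hcol hι, label_partner hα, hcol hι, hj]
        · rintro ⟨ι, α⟩ hx ⟨ι', α'⟩ hx' heq
          simp only [coe_sigma, Set.mem_sigma_iff, coe_filter, mem_univ, true_and,
            Set.mem_setOf_eq, mem_coe, Set.mem_toFinset] at hx hx'
          obtain ⟨hw, hB⟩ := Sigma.mk.inj_iff.mp heq
          have hopen : ∀ j, j < partner α j ↔ j < partner α' j := fun j => by
            simpa using congrFun hw j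
          obtain ⟨rfl, rfl⟩ := eq_of_lt_partner_iff hx.2 hx'.2
            (fun j => (hcol hx.1 j).trans (hcol hx'.1 j).symm) hopen fun j hj hle => by
              have hjR : j ∈ R := by
                simp only [R, mem_filter, mem_univ, true_and, Fin.ext_iff, ← hcol hx.1]
                omega
              simpa [hjR, hj, (hopen j).mp hj] using Finset.ext_iff.mp (eq_of_heq hB) j
          rfl
    _ ≤ 2 ^ k * 2 ^ (#R / 2) := by simpa using card_sigma_powerset_filter_le R

open Nat in
theorem sum_factorial_div_mul_pow (N k : ℕ) (x : ℝ) :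
    ∑ ℓ ∈ (Fintype.piFinset fun _ : Fin N => range (k + 1)).filter (fun ℓ => ∑ i, ℓ i ≤ k),
      (k ! : ℝ) / ((∏ i, ((ℓ i)! : ℝ)) * ((k - ∑ i, ℓ i)! : ℝ)) * x ^ (k - ∑ i, ℓ i)
      = (x + N) ^ k := by
  have hsum : ∑ v, (Fin.cons x fun _ => 1 : Fin (N + 1) → ℝ) v = x + N := by
    simp [Fin.sum_univ_succ]
  rw [← hsum, Finset.sum_pow_eq_sum_piAntidiag]
  refine Finset.sum_nbij' (fun ℓ => Fin.cons (k - ∑ i, ℓ i) ℓ) Fin.tail ?_ ?_ ?_ ?_ ?_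
  · intro ℓ hℓ
    have := (Finset.mem_filter.mp hℓ).2
    simp only [Finset.mem_piAntidiag, Fin.sum_univ_succ, Fin.cons_zero, Fin.cons_succ]
    refine ⟨by omega, fun _ _ => mem_univ _⟩
  · intro d hd
    simp only [Finset.mem_piAntidiag, Fin.sum_univ_succ] at hd
    simp only [mem_filter, Fintype.mem_piFinset, mem_range, Fin.tail]
    have hle : ∀ i : Fin N, d i.succ ≤ ∑ j : Fin N, d j.succ := fun i =>
      Finset.single_le_sum (f := fun j : Fin N => d j.succ) (fun _ _ => zero_le _) (mem_univ i)
    exact ⟨fun i => by have := hle i; omega, by omega⟩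
  · intro ℓ _
    exact Fin.tail_cons _ _
  · intro d hd
    simp only [Finset.mem_piAntidiag, Fin.sum_univ_succ] at hd
    rw [show k - ∑ i, Fin.tail d i = d 0 by simp only [Fin.tail]; omega, Fin.cons_self_tail]
  · intro ℓ hℓ
    have hle := (Finset.mem_filter.mp hℓ).2
    have hspec := Nat.multinomial_spec univ (Fin.cons (k - ∑ i, ℓ i) ℓ : Fin (N + 1) → ℕ)
    simp only [Fin.prod_univ_succ, Fin.sum_univ_succ, Fin.cons_zero, Fin.cons_succ,
      Nat.sub_add_cancel hle] at hspec
    simp only [Fin.prod_univ_succ, Fin.cons_zero, Fin.cons_succ, one_pow, prod_const_one, mul_one]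
    rw [div_mul_eq_mul_div, div_eq_iff (by positivity)]
    rw [← hspec]
    push_cast
    ring

theorem Mk_eq (n k : ℕ) : Mk n k = 2 ^ k * (√2 + (n - 3 : ℕ)) ^ k := by
  rw [Mk, ← sum_factorial_div_mul_pow]
  congr 1
  refine Finset.sum_congr rfl fun ℓ _ => ?_
  rw [Real.rpow_div_two_eq_sqrt _ zero_le_two, Real.rpow_natCast]

theorem sum_pow_card_filter_eq {γ R : Type*} [Fintype γ] [DecidableEq γ] [CommSemiring R]
    (b : γ) (x : R) (k : ℕ) :
    ∑ c : Fin k → γ, x ^ #(univ.filter fun j => c j = b) = (x + (Fintype.card γ - 1 : ℕ)) ^ k := by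
  have hweight : ∑ v, (if v = b then x else 1) = x + (Fintype.card γ - 1 : ℕ) := by
    rw [← Finset.add_sum_erase _ _ (mem_univ b), if_pos rfl,
      Finset.sum_congr rfl fun v hv => if_neg (ne_of_mem_erase hv), sum_const,
      card_erase_of_mem (mem_univ _), card_univ, nsmul_one]
  rw [← hweight, Fintype.sum_pow]
  refine sum_congr rfl fun c _ => ?_
  rw [prod_ite, prod_const_one, mul_one, prod_const]

theorem two_pow_div_two_le_sqrt_two_pow (r : ℕ) : (2 : ℝ) ^ (r / 2) ≤ √2 ^ r := by
  calc (2 : ℝ) ^ (r / 2) = √2 ^ (2 * (r / 2)) := by rw [pow_mul, Real.sq_sqrt zero_le_two]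
    _ ≤ √2 ^ r := pow_le_pow_right₀ Real.one_lt_sqrt_two.le (Nat.mul_div_le r 2)

end LRH

open LRH in
theorem statement8_general {n : ℕ} (hn : 3 ≤ n) (k : ℕ) :
    ((∑ ι : Fin k → Fin (n - 1), (NC2Set (KXY n) ι).ncard : ℕ) : ℝ) ≤ Mk n k := by
  classical
  rw [← sum_fiberwise univ (xyColor hn ∘ ·), Mk_eq, show n - 3 = Fintype.card (Fin (n - 2)) - 1 by
    simp only [Fintype.card_fin]; omega, ← sum_pow_card_filter_eq ⟨0, by omega⟩, mul_sum]
  push_cast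
  refine sum_le_sum fun c _ => ?_
  calc _ ≤ ((2 ^ k * 2 ^ (#(univ.filter fun j => c j = ⟨0, by omega⟩) / 2) : ℕ) : ℝ) := by
        exact_mod_cast sum_ncard_NC2Set_fiber_le hn c
    _ ≤ _ := by
        push_cast
        gcongr
        exact two_pow_div_two_le_sqrt_two_pow _

open LRH in
/-- XY-model: for every even `k ≥ 2`,
`Σ_ι #NC₂^{(ε,ι)}(k) ≤ M_k`. -/
theorem statement8 {n : ℕ} (hn : 3 ≤ n) (k : ℕ) (hk : 2 ≤ k) (hke : Even k) :
    ((∑ ι : Fin k → Fin (n - 1), (NC2Set (KXY n) ι).ncard : ℕ) : ℝ) ≤ Mk n k :=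
  statement8_general hn k
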